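/- arXiv:1607.03519 — 2 statements merged into one kernel-verified Lean document; each statement's English description precedes it below -/
import Mathlib

section
/- Let φ denote the standard Gaussian density and Φ the standard Gaussian cumulative distribution function, and define ψ(x) = φ(x)/Φ(x). Then for every real x, the derivative ψ'(x) lies strictly between -1 and 0. -/
open Real Set

/-- The standard Gaussian density. -/
noncomputable def stdGaussPDF (x : ℝ) : ℝ :=
  (Real.sqrt (2 * Real.pi))⁻¹ * Real.exp (-x ^ 2 / 2)

/-- The standard Gaussian cumulative distribution function. -/
noncomputable def stdGaussCDF (x : ℝ) : ℝ :=
  ∫ u in Set.Iic x, stdGaussPDF u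

/-- The inverse Mill's ratio ψ(x) = φ(x)/Φ(x). -/
noncomputable def psiMill (x : ℝ) : ℝ := stdGaussPDF x / stdGaussCDF x

/-!
Since `φ' = -x φ` and `Φ' = φ`, we get `ψ' = -ψ (x + ψ)`, so `ψ' ∈ (-1, 0)` amounts to
`0 < φ + x Φ` together with `φ (x Φ + φ) < Φ²`. Both follow from one principle: a function with
positive derivative that vanishes at `-∞` is positive. The derivatives close up into a chain,
* `(φ + x Φ)' = Φ`,
* `((1 + x²) Φ + x φ)' = 2 (φ + x Φ)`,
* `(Φ² - φ (x Φ + φ))' = φ ((1 + x²) Φ + x φ)`,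

and the limits at `-∞` come from `Φ ≤ φ` on `(-∞, -1]` and the Gaussian decay of `φ`.
-/

open MeasureTheory Filter Topology

theorem pos_of_hasDerivAt_pos_of_tendsto_atBot {f f' : ℝ → ℝ}
    (hf : ∀ x, HasDerivAt f (f' x) x) (hf' : ∀ x, 0 < f' x) (hlim : Tendsto f atBot (𝓝 0))
    (x : ℝ) : 0 < f x := by
  have hmono := strictMono_of_hasDerivAt_pos hf hf'
  obtain ⟨y, hyx⟩ := exists_lt x
  exact (hmono.monotone.le_of_tendsto hlim y).trans_lt (hmono hyx)

theorem stdGaussPDF_pos (x : ℝ) : 0 < stdGaussPDF x := by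
  unfold stdGaussPDF
  positivity

theorem stdGaussPDF_eq_mul_exp (x : ℝ) :
    stdGaussPDF x = (√(2 * π))⁻¹ * rexp (-(1 / 2) * x ^ 2) := by
  unfold stdGaussPDF
  ring_nf

theorem continuous_stdGaussPDF : Continuous stdGaussPDF := by
  unfold stdGaussPDF
  fun_prop

theorem integrable_stdGaussPDF : Integrable stdGaussPDF := by
  simpa only [← stdGaussPDF_eq_mul_exp] using
    (integrable_exp_neg_mul_sq (by norm_num : (0 : ℝ) < 1 / 2)).const_mul (√(2 * π))⁻¹

theorem integrable_neg_mul_stdGaussPDF : Integrable fun x => -x * stdGaussPDF x := by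
  refine ((integrable_mul_exp_neg_mul_sq (by norm_num : (0 : ℝ) < 1 / 2)).const_mul
    (-(√(2 * π))⁻¹)).congr (Eventually.of_forall fun x => ?_)
  simp only [stdGaussPDF_eq_mul_exp]
  ring

theorem hasDerivAt_stdGaussPDF (x : ℝ) : HasDerivAt stdGaussPDF (-x * stdGaussPDF x) x := by
  refine (((hasDerivAt_pow 2 x).fun_neg.div_const 2).exp.const_mul
    (√(2 * π))⁻¹).congr_deriv ?_
  unfold stdGaussPDF
  ring

theorem tendsto_pow_mul_stdGaussPDF_atBot (n : ℕ) :
    Tendsto (fun x => x ^ n * stdGaussPDF x) atBot (𝓝 0) := by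
  have hdecay := ((tendsto_rpow_abs_mul_exp_neg_mul_sq_cocompact
    (by norm_num : (0 : ℝ) < 1 / 2) n).mono_left atBot_le_cocompact).const_mul (√(2 * π))⁻¹
  rw [mul_zero] at hdecay
  refine squeeze_zero_norm (fun x => le_of_eq ?_) hdecay
  rw [stdGaussPDF_eq_mul_exp, Real.rpow_natCast, norm_mul, norm_mul, norm_pow, Real.norm_eq_abs,
    Real.norm_of_nonneg (by positivity), Real.norm_of_nonneg (by positivity)]
  ring

theorem tendsto_stdGaussPDF_atBot : Tendsto stdGaussPDF atBot (𝓝 0) := by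
  simpa using tendsto_pow_mul_stdGaussPDF_atBot 0

theorem hasDerivAt_stdGaussCDF (x : ℝ) : HasDerivAt stdGaussCDF (stdGaussPDF x) x := by
  have hsplit : ∀ y, stdGaussCDF y = stdGaussCDF 0 + ∫ u in (0 : ℝ)..y, stdGaussPDF u := by
    intro y
    rw [← intervalIntegral.integral_Iic_sub_Iic integrable_stdGaussPDF.integrableOn
      integrable_stdGaussPDF.integrableOn, stdGaussCDF, stdGaussCDF]
    ring
  refine (HasDerivAt.const_add _ ?_).congr_of_eventuallyEq (.of_forall hsplit)
  exact intervalIntegral.integral_hasDerivAt_right integrable_stdGaussPDF.intervalIntegrable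
    (continuous_stdGaussPDF.stronglyMeasurableAtFilter _ _) continuous_stdGaussPDF.continuousAt

theorem stdGaussCDF_pos (x : ℝ) : 0 < stdGaussCDF x := by
  rw [stdGaussCDF, setIntegral_pos_iff_support_of_nonneg_ae
    (Eventually.of_forall fun y => (stdGaussPDF_pos y).le) integrable_stdGaussPDF.integrableOn,
    Function.support_eq_univ fun y => (stdGaussPDF_pos y).ne', univ_inter]
  simp [Real.volume_Iic]

theorem integral_Iic_neg_mul_stdGaussPDF (x : ℝ) :
    ∫ u in Iic x, -u * stdGaussPDF u = stdGaussPDF x := by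
  simpa using integral_Iic_of_hasDerivAt_of_tendsto' (fun u _ => hasDerivAt_stdGaussPDF u)
    integrable_neg_mul_stdGaussPDF.integrableOn tendsto_stdGaussPDF_atBot

theorem stdGaussCDF_le_stdGaussPDF {x : ℝ} (hx : x ≤ -1) : stdGaussCDF x ≤ stdGaussPDF x := by
  rw [stdGaussCDF, ← integral_Iic_neg_mul_stdGaussPDF]
  refine setIntegral_mono_on integrable_stdGaussPDF.integrableOn
    integrable_neg_mul_stdGaussPDF.integrableOn measurableSet_Iic fun u (hu : u ≤ x) => ?_
  nlinarith [stdGaussPDF_pos u]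

theorem tendsto_pow_mul_stdGaussCDF_atBot (n : ℕ) :
    Tendsto (fun x => x ^ n * stdGaussCDF x) atBot (𝓝 0) := by
  refine squeeze_zero_norm' ?_ (by simpa using (tendsto_pow_mul_stdGaussPDF_atBot n).norm)
  filter_upwards [eventually_le_atBot (-1 : ℝ)] with x hx
  rw [norm_mul, norm_pow, Real.norm_eq_abs, Real.norm_eq_abs, abs_of_pos (stdGaussCDF_pos x),
    abs_of_pos (stdGaussPDF_pos x)]
  gcongr
  exact stdGaussCDF_le_stdGaussPDF hx

theorem tendsto_stdGaussCDF_atBot : Tendsto stdGaussCDF atBot (𝓝 0) := by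
  simpa using tendsto_pow_mul_stdGaussCDF_atBot 0

theorem stdGaussPDF_add_mul_stdGaussCDF_pos (x : ℝ) :
    0 < stdGaussPDF x + x * stdGaussCDF x := by
  have hlim : Tendsto (fun x => stdGaussPDF x + x * stdGaussCDF x) atBot (𝓝 0) := by
    simpa using tendsto_stdGaussPDF_atBot.add (tendsto_pow_mul_stdGaussCDF_atBot 1)
  refine pos_of_hasDerivAt_pos_of_tendsto_atBot (fun y => ?_) stdGaussCDF_pos hlim x
  refine ((hasDerivAt_stdGaussPDF y).fun_add ((hasDerivAt_id' y).fun_mul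
    (hasDerivAt_stdGaussCDF y))).congr_deriv ?_
  ring

theorem one_add_sq_mul_stdGaussCDF_add_mul_stdGaussPDF_pos (x : ℝ) :
    0 < (1 + x ^ 2) * stdGaussCDF x + x * stdGaussPDF x := by
  have hlim :
      Tendsto (fun x => (1 + x ^ 2) * stdGaussCDF x + x * stdGaussPDF x) atBot (𝓝 0) := by
    simpa [add_mul] using (tendsto_stdGaussCDF_atBot.add (tendsto_pow_mul_stdGaussCDF_atBot 2)).add
      (tendsto_pow_mul_stdGaussPDF_atBot 1)
  refine pos_of_hasDerivAt_pos_of_tendsto_atBot (fun y => ?_)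
    (fun y => mul_pos two_pos (stdGaussPDF_add_mul_stdGaussCDF_pos y)) hlim x
  refine ((((hasDerivAt_pow 2 y).const_add 1).fun_mul (hasDerivAt_stdGaussCDF y)).fun_add
    ((hasDerivAt_id' y).fun_mul (hasDerivAt_stdGaussPDF y))).congr_deriv ?_
  ring

theorem stdGaussPDF_mul_lt_sq_stdGaussCDF (x : ℝ) :
    stdGaussPDF x * (x * stdGaussCDF x + stdGaussPDF x) < stdGaussCDF x ^ 2 := by
  have hlim : Tendsto (fun x => stdGaussCDF x ^ 2 -
      stdGaussPDF x * (x * stdGaussCDF x + stdGaussPDF x)) atBot (𝓝 0) := by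
    simpa using (tendsto_stdGaussCDF_atBot.pow 2).sub (tendsto_stdGaussPDF_atBot.mul
      ((tendsto_pow_mul_stdGaussCDF_atBot 1).add tendsto_stdGaussPDF_atBot))
  refine sub_pos.mp (pos_of_hasDerivAt_pos_of_tendsto_atBot (fun y => ?_)
    (fun y => mul_pos (stdGaussPDF_pos y) (one_add_sq_mul_stdGaussCDF_add_mul_stdGaussPDF_pos y))
    hlim x)
  refine (((hasDerivAt_stdGaussCDF y).fun_pow 2).fun_sub ((hasDerivAt_stdGaussPDF y).fun_mul
    (((hasDerivAt_id' y).fun_mul (hasDerivAt_stdGaussCDF y)).fun_add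
      (hasDerivAt_stdGaussPDF y)))).congr_deriv ?_
  ring

theorem deriv_psiMill_mem_Ioo (x : ℝ) :
    deriv psiMill x ∈ Set.Ioo (-1 : ℝ) 0 := by
  have hderiv : HasDerivAt psiMill _ x :=
    (hasDerivAt_stdGaussPDF x).div (hasDerivAt_stdGaussCDF x) (stdGaussCDF_pos x).ne'
  rw [hderiv.deriv]
  have hΦ2 : 0 < stdGaussCDF x ^ 2 := pow_pos (stdGaussCDF_pos x) 2
  have hφ := stdGaussPDF_pos x
  have hlower := stdGaussPDF_mul_lt_sq_stdGaussCDF x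
  have hupper := stdGaussPDF_add_mul_stdGaussCDF_pos x
  constructor
  · rw [lt_div_iff₀ hΦ2]
    nlinarith
  · refine div_neg_of_neg_of_pos ?_ hΦ2
    nlinarith
end

section
/- Fix real numbers x, a > 0, b > 0, and λ > 0, and suppose ξ > 0 satisfies (λ - ξa)/√(bξ) = x. Then 0 ≤ ξ - (λ/a - x·√(λb/a³)) ≤ (b/a²)·x². Equivalently, (λ - ξa)/√(λb/a) ≤ x ≤ (λ - ξa)/√(λb/a) + √(b/(aλ))·x². -/
/-!
With `s = √(bξ)` and `t = √(λb/a)` the defining equation `x s = λ - ξa` reads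
`t² - s² = (b/a) x s`, so `x(t - s)(t + s) = (b/a) x² s`. Since `0 < s/(t + s) < 1`, the quantity
`x(t - s)` lies between `0` and `(b/a) x²`. Both pairs of bounds are rescalings of this one: the
first because `ξ - (λ/a - x t/a) = x(t - s)/a`, the second after multiplying through by `t`, using
`√(b/(aλ)) = b/(a t)`.
-/

lemma mul_sub_bounds_of_sq_sub_sq_eq {k x s t : ℝ} (hk : 0 < k) (hs : 0 ≤ s) (ht : 0 < t)
    (h : t ^ 2 - s ^ 2 = k * (x * s)) :
    0 ≤ x * (t - s) ∧ x * (t - s) ≤ k * x ^ 2 := by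
  have hprod : x * (t - s) * (t + s) = k * x ^ 2 * s := by linear_combination x * h
  have hts : 0 < t + s := by positivity
  refine ⟨?_, ?_⟩
  · have : 0 ≤ x * (t - s) * (t + s) := hprod ▸ by positivity
    exact nonneg_of_mul_nonneg_left this hts
  · refine le_of_mul_le_mul_right ?_ hts
    rw [hprod]
    exact mul_le_mul_of_nonneg_left (by linarith) (by positivity)

theorem xi_sqrt_bounds (x a b lam ξ : ℝ) (ha : 0 < a) (hb : 0 < b) (hlam : 0 < lam)
    (hξ : 0 < ξ) (heq : (lam - ξ * a) / Real.sqrt (b * ξ) = x) :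
    (0 ≤ ξ - (lam / a - x * Real.sqrt (lam * b / a ^ 3)) ∧
      ξ - (lam / a - x * Real.sqrt (lam * b / a ^ 3)) ≤ b / a ^ 2 * x ^ 2) ∧
    ((lam - ξ * a) / Real.sqrt (lam * b / a) ≤ x ∧
      x ≤ (lam - ξ * a) / Real.sqrt (lam * b / a) + Real.sqrt (b / (a * lam)) * x ^ 2) := by
  set s := Real.sqrt (b * ξ)
  set t := Real.sqrt (lam * b / a)
  have hs : 0 < s := Real.sqrt_pos.mpr (by positivity)
  have ht : 0 < t := Real.sqrt_pos.mpr (by positivity)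
  have hs2 : s ^ 2 = b * ξ := Real.sq_sqrt (by positivity)
  have ht2 : t ^ 2 = lam * b / a := Real.sq_sqrt (by positivity)
  have hx : lam - ξ * a = x * s := by rw [← heq, div_mul_cancel₀ _ hs.ne']
  have hsq : t ^ 2 - s ^ 2 = b / a * (x * s) := by
    rw [ht2, hs2, ← hx]; field_simp
  obtain ⟨hlow, hupp⟩ := mul_sub_bounds_of_sq_sub_sq_eq (by positivity) hs.le ht hsq
  have hrt : Real.sqrt (lam * b / a ^ 3) = t / a := by
    rw [show lam * b / a ^ 3 = lam * b / a / a ^ 2 by field_simp, Real.sqrt_div' _ (by positivity),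
      Real.sqrt_sq ha.le]
  have hrb : Real.sqrt (b / (a * lam)) = b / (a * t) := by
    rw [← Real.sqrt_sq (by positivity : 0 ≤ b / (a * t)), div_pow, mul_pow, ht2]
    congr 1; field_simp
  have hgap : ξ - (lam / a - x * (t / a)) = x * (t - s) / a := by
    rw [show ξ = (lam - x * s) / a from (eq_div_iff ha.ne').mpr (by linarith)]; ring
  rw [hrt, hrb, hgap, hx]
  refine ⟨⟨div_nonneg hlow ha.le, ?_⟩, ?_, ?_⟩
  · calc x * (t - s) / a ≤ b / a * x ^ 2 / a := by gcongr
      _ = b / a ^ 2 * x ^ 2 := by ring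
  · rw [div_le_iff₀ ht]; linarith
  · rw [show x * s / t + b / (a * t) * x ^ 2 = (x * s + b / a * x ^ 2) / t by field_simp,
      le_div_iff₀ ht]
    linarith
end
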